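/- Let |ψ₀⟩ = (2|000⟩ + |101⟩ + |110⟩)/√6 and |ψ₁⟩ = (2|111⟩ + |010⟩ + |001⟩)/√6 be unit vectors in ℂ²⊗ℂ²⊗ℂ² (qubits ordered A, B, B'), and let ρ_ABB' = (1/2)|ψ₀⟩⟨ψ₀| + (1/2)|ψ₁⟩⟨ψ₁|. Then tr_{B'}(ρ_ABB') = tr_B(ρ_ABB') = ρ_W(2/3), where ρ_W(2/3) = (1/12)·I₄ + (2/3)·|φ⟩⟨φ| with |φ⟩ = (|00⟩+|11⟩)/√2. In particular, ρ_ABB' is a symmetric extension of the Werner state ρ_W(2/3). -/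

import Mathlib

open Matrix Kronecker Complex
open scoped ComplexOrder

abbrev Q2 : Type := Fin 2 × Fin 2
abbrev Q3 : Type := Fin 2 × Fin 2 × Fin 2

noncomputable section

/-- A two-qubit state: positive semidefinite with trace one. -/
def IsState2 (ρ : Matrix Q2 Q2 ℂ) : Prop := ρ.PosSemidef ∧ ρ.trace = 1

/-- A three-qubit state: positive semidefinite with trace one. -/
def IsState3 (ρ : Matrix Q3 Q3 ℂ) : Prop := ρ.PosSemidef ∧ ρ.trace = 1

/-- Partial trace over the first qubit (system A) of a two-qubit operator. -/
def ptraceA (ρ : Matrix Q2 Q2 ℂ) : Matrix (Fin 2) (Fin 2) ℂ :=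
  Matrix.of fun b b' => ∑ a, ρ (a, b) (a, b')

/-- Partial trace over the middle qubit (system B) of a three-qubit operator;
the result is indexed by the systems (A, B'). -/
def ptraceB3 (ρ : Matrix Q3 Q3 ℂ) : Matrix Q2 Q2 ℂ :=
  Matrix.of fun p q => ∑ b, ρ (p.1, b, p.2) (q.1, b, q.2)

/-- Partial trace over the last qubit (system B') of a three-qubit operator;
the result is indexed by the systems (A, B). -/
def ptraceB'3 (ρ : Matrix Q3 Q3 ℂ) : Matrix Q2 Q2 ℂ :=
  Matrix.of fun p q => ∑ c, ρ (p.1, p.2, c) (q.1, q.2, c)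

/-- A two-qubit state admits a symmetric extension if there is a three-qubit state whose
AB and AB' marginals both equal it. -/
def SymExt (ρ : Matrix Q2 Q2 ℂ) : Prop :=
  ∃ τ : Matrix Q3 Q3 ℂ, IsState3 τ ∧ ptraceB'3 τ = ρ ∧ ptraceB3 τ = ρ

/-- f(ρ) = tr(ρ_B²) − tr(ρ²) + 4√(det ρ). -/
def fC (ρ : Matrix Q2 Q2 ℂ) : ℝ :=
  ((ptraceA ρ * ptraceA ρ).trace).re - ((ρ * ρ).trace).re + 4 * Real.sqrt ρ.det.re

/-- The rank-one projector |ψ⟩⟨ψ|. -/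
def proj {n : Type*} (ψ : n → ℂ) : Matrix n n ℂ := Matrix.vecMulVec ψ (star ψ)

/-- A two-qubit state admits a pure symmetric extension. -/
def PureSymExt (ρ : Matrix Q2 Q2 ℂ) : Prop :=
  ∃ ψ : Q3 → ℂ, (∑ x, Complex.normSq (ψ x)) = 1 ∧
    ptraceB'3 (proj ψ) = ρ ∧ ptraceB3 (proj ψ) = ρ

/-- The multiset of nonzero eigenvalues (with multiplicity) of a complex matrix. -/
def nonzeroSpec {n : Type*} [Fintype n] [DecidableEq n] (M : Matrix n n ℂ) : Multiset ℂ :=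
  M.charpoly.roots.filter (· ≠ 0)

/-- The trace norm ‖X‖_tr = tr √(X†X) of a 2×2 complex matrix. -/
def trNorm (X : Matrix (Fin 2) (Fin 2) ℂ) : ℝ :=
  (((Matrix.posSemidef_conjTranspose_mul_self X).1.eigenvectorUnitary.1 *
      diagonal ((fun r : ℝ => (r : ℂ)) ∘ (√·) ∘ (Matrix.posSemidef_conjTranspose_mul_self X).1.eigenvalues) *
      (star (Matrix.posSemidef_conjTranspose_mul_self X).1.eigenvectorUnitary :
        Matrix (Fin 2) (Fin 2) ℂ)).trace).re

/-- The supporting-hyperplane observable H_AB(σ) = √(det σ)·σ⁻¹ − σ + I₂⊗σ_B. -/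
def HAB (σ : Matrix Q2 Q2 ℂ) : Matrix Q2 Q2 ℂ :=
  ((Real.sqrt σ.det.re : ℝ) : ℂ) • σ⁻¹ - σ + (1 : Matrix (Fin 2) (Fin 2) ℂ) ⊗ₖ ptraceA σ

/-- The Bell state (|00⟩ + |11⟩)/√2. -/
def phiBell : Q2 → ℂ := fun p => if p.1 = p.2 then (((Real.sqrt 2)⁻¹ : ℝ) : ℂ) else 0

/-- The two-qubit Werner state ρ_W(p) = (1−p)·I/4 + p·|φ⟩⟨φ|. -/
def werner (p : ℝ) : Matrix Q2 Q2 ℂ :=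
  (((1 - p) / 4 : ℝ) : ℂ) • (1 : Matrix Q2 Q2 ℂ) + (p : ℂ) • proj phiBell

/-- |ψ₀⟩ = (2|000⟩ + |101⟩ + |110⟩)/√6. -/
def psi0 : Q3 → ℂ := fun x =>
  (if x = (0, 0, 0) then 2 else if x = (1, 0, 1) then 1 else if x = (1, 1, 0) then 1 else 0) /
    ((Real.sqrt 6 : ℝ) : ℂ)

/-- |ψ₁⟩ = (2|111⟩ + |010⟩ + |001⟩)/√6. -/
def psi1 : Q3 → ℂ := fun x =>
  (if x = (1, 1, 1) then 2 else if x = (0, 1, 0) then 1 else if x = (0, 0, 1) then 1 else 0) /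
    ((Real.sqrt 6 : ℝ) : ℂ)

/-- ρ_ABB' = ½|ψ₀⟩⟨ψ₀| + ½|ψ₁⟩⟨ψ₁|. -/
def wernerExt : Matrix Q3 Q3 ℂ := (1 / 2 : ℂ) • proj psi0 + (1 / 2 : ℂ) • proj psi1


lemma s6 : ((Real.sqrt 6 : ℝ) : ℂ) * ((Real.sqrt 6 : ℝ) : ℂ) = 6 := by
  norm_cast
  rw [Real.mul_self_sqrt] ; norm_num

lemma s2 : ((Real.sqrt 2 : ℝ) : ℂ) * ((Real.sqrt 2 : ℝ) : ℂ) = 2 := by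
  norm_cast
  rw [Real.mul_self_sqrt] ; norm_num

lemma s6ne : ((Real.sqrt 6 : ℝ) : ℂ) ≠ 0 := by
  simp [Real.sqrt_eq_zero']

lemma s2ne : ((Real.sqrt 2 : ℝ) : ℂ) ≠ 0 := by
  simp [Real.sqrt_eq_zero']

lemma s2inv : (((Real.sqrt 2 : ℝ) : ℂ))⁻¹ * (((Real.sqrt 2 : ℝ) : ℂ))⁻¹ = 1 / 2 := by
  rw [← mul_inv, s2]; norm_num

lemma proj_posSemidef {n : Type*} [Fintype n] (ψ : n → ℂ) : (proj ψ).PosSemidef := by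
  have : proj ψ = Matrix.replicateCol Unit ψ * (Matrix.replicateCol Unit ψ)ᴴ := by
    rw [Matrix.conjTranspose_replicateCol, proj, Matrix.vecMulVec_eq Unit]
  rw [this]
  exact Matrix.posSemidef_self_mul_conjTranspose _

lemma smul_posSemidef {n : Type*} [Fintype n] {M : Matrix n n ℂ} (hM : M.PosSemidef)
    {c : ℂ} (hc : 0 ≤ c) : (c • M).PosSemidef := by
  constructor
  · unfold Matrix.IsHermitian
    rw [Matrix.conjTranspose_smul, hM.isHermitian.eq]
    congr 1
    exact Complex.conj_eq_iff_im.mpr ((Complex.le_def.mp hc).2.symm)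
  · intro x
    exact (hM.smul hc).2 x

lemma trace_proj_psi0 : (proj psi0).trace = 1 := by
  simp only [proj, Matrix.trace, Matrix.diag, Matrix.vecMulVec_apply, Pi.star_apply,
    Fintype.sum_prod_type, Fin.sum_univ_two, psi0]
  norm_num [Complex.conj_ofReal, map_div₀, Prod.ext_iff, Fin.ext_iff]
  field_simp
  rw [sq ((Real.sqrt 6 : ℝ) : ℂ), s6]
  ring

lemma trace_proj_psi1 : (proj psi1).trace = 1 := by
  simp only [proj, Matrix.trace, Matrix.diag, Matrix.vecMulVec_apply, Pi.star_apply,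
    Fintype.sum_prod_type, Fin.sum_univ_two, psi1]
  norm_num [Complex.conj_ofReal, map_div₀, Prod.ext_iff, Fin.ext_iff]
  field_simp
  rw [sq ((Real.sqrt 6 : ℝ) : ℂ), s6]
  ring

set_option maxHeartbeats 4000000 in
/-- ρ_ABB' is a three-qubit state whose B'- and B-marginals both equal the Werner state
ρ_W(2/3) = (1/12)·I₄ + (2/3)·|φ⟩⟨φ|; i.e. it is a symmetric extension of ρ_W(2/3). -/
theorem wernerExt_is_symmetric_extension :
    IsState3 wernerExt ∧
      ptraceB'3 wernerExt = werner (2 / 3) ∧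
      ptraceB3 wernerExt = werner (2 / 3) := by
  refine ⟨⟨?_, ?_⟩, ?_, ?_⟩
  · exact (smul_posSemidef (proj_posSemidef psi0) (by simp [Complex.le_def])).add
      (smul_posSemidef (proj_posSemidef psi1) (by simp [Complex.le_def]))
  · rw [wernerExt, Matrix.trace_add, Matrix.trace_smul, Matrix.trace_smul,
      trace_proj_psi0, trace_proj_psi1]
    norm_num
  · ext ⟨a, b⟩ ⟨c, d⟩
    fin_cases a <;> fin_cases b <;> fin_cases c <;> fin_cases d <;>
      simp [ptraceB'3, wernerExt, proj, Matrix.vecMulVec_apply, psi0, psi1, werner, phiBell, Fin.sum_univ_two,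
        Matrix.one_apply, Prod.ext_iff, Complex.conj_ofReal, map_div₀,
        div_mul_div_comm, s6, s2, s2inv, map_ofNat] <;>
      norm_num
  · ext ⟨a, b⟩ ⟨c, d⟩
    fin_cases a <;> fin_cases b <;> fin_cases c <;> fin_cases d <;>
      simp [ptraceB3, wernerExt, proj, Matrix.vecMulVec_apply, psi0, psi1, werner, phiBell, Fin.sum_univ_two,
        Matrix.one_apply, Prod.ext_iff, Complex.conj_ofReal, map_div₀,
        div_mul_div_comm, s6, s2, s2inv, map_ofNat] <;>
      norm_num
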